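/- arXiv:2504.01663 — 2 statements merged into one kernel-verified Lean document; each statement's English description precedes it below -/
import Mathlib

section
/- For ε ∈ (0, 1/2) and x ∈ (0,1), the Kullback–Leibler divergence between Bernoulli distributions satisfies d_KL((1−ε)x ∥ x) ≥ (ε²/4)·x, where d_KL(y∥x) = y·log(y/x) + (1−y)·log((1−y)/(1−x)). -/
/-- Binary KL divergence bound: for `ε ∈ (0,1/2)` and `x ∈ (0,1)`,
`d_KL((1-ε)x ∥ x) ≥ (ε²/4)·x`. -/
theorem kl_divergence_lower_bound (ε x : ℝ)
    (hε : ε ∈ Set.Ioo (0 : ℝ) (1 / 2)) (hx : x ∈ Set.Ioo (0 : ℝ) 1) :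
    (ε ^ 2 / 4) * x ≤
      (1 - ε) * x * Real.log ((1 - ε) * x / x)
        + (1 - (1 - ε) * x) * Real.log ((1 - (1 - ε) * x) / (1 - x)) := by
  obtain ⟨hε0, hε2⟩ := hε
  obtain ⟨hx0, hx1⟩ := hx
  have hε1 : ε < 1 := by linarith
  have h1ε : (0:ℝ) < 1 - ε := by linarith
  -- s = √(1-ε)
  set s : ℝ := Real.sqrt (1 - ε) with hs
  have hs0 : 0 < s := Real.sqrt_pos.mpr h1ε
  have hs2 : s ^ 2 = 1 - ε := Real.sq_sqrt h1ε.le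
  have hs1 : s < 1 := by
    nlinarith [hs2, hs0]
  -- first log: log((1-ε)x/x) = log(1-ε) = 2 log s
  have hxne : x ≠ 0 := ne_of_gt hx0
  have hlog1 : Real.log ((1 - ε) * x / x) = 2 * Real.log s := by
    rw [mul_div_assoc, div_self hxne, mul_one, ← hs2, Real.log_pow]
    push_cast; ring
  -- bound: log s ≥ 1 - 1/s
  have hlogs : 1 - s⁻¹ ≤ Real.log s := Real.one_sub_inv_le_log_of_pos hs0
  -- second term: a = 1 - (1-ε)x ≥ b = 1 - x > 0
  have ha : 0 < 1 - (1 - ε) * x := by nlinarith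
  have hb : 0 < 1 - x := by linarith
  have hab : (1 - (1 - ε) * x) / (1 - x) > 0 := by positivity
  have hlog2 : 1 - ((1 - (1 - ε) * x) / (1 - x))⁻¹ ≤
      Real.log ((1 - (1 - ε) * x) / (1 - x)) :=
    Real.one_sub_inv_le_log_of_pos hab
  have hinv : ((1 - (1 - ε) * x) / (1 - x))⁻¹ = (1 - x) / (1 - (1 - ε) * x) := by
    rw [inv_div]
  rw [hinv] at hlog2
  -- second term lower bound: a * log(a/b) ≥ a - b = ε x
  have h2 : ε * x ≤ (1 - (1 - ε) * x) * Real.log ((1 - (1 - ε) * x) / (1 - x)) := by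
    have := mul_le_mul_of_nonneg_left hlog2 ha.le
    have hcancel : (1 - (1 - ε) * x) * ((1 - x) / (1 - (1 - ε) * x)) = 1 - x := by
      field_simp
    nlinarith [this, hcancel]
  -- first term lower bound
  have h1 : 2 * x * (s ^ 2 - s) ≤ (1 - ε) * x * Real.log ((1 - ε) * x / x) := by
    rw [hlog1, ← hs2]
    have h' : s ^ 2 * (1 - s⁻¹) ≤ s ^ 2 * Real.log s :=
      mul_le_mul_of_nonneg_left hlogs (by positivity)
    have hc : s ^ 2 * (1 - s⁻¹) = s ^ 2 - s := by
      field_simp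
    nlinarith [h', hc, hx0]
  -- combine: x(1-s)² ≥ x(1-s²)²/4 since (1+s)² ≤ 4
  have key : (ε ^ 2 / 4) * x ≤ 2 * x * (s ^ 2 - s) + ε * x := by
    have hε' : ε = 1 - s ^ 2 := by linarith [hs2]
    rw [hε']
    nlinarith [sq_nonneg (1 - s), sq_nonneg ((1 - s) * (1 + s)), hs1, hs0, hx0,
      mul_nonneg (mul_nonneg hx0.le (sq_nonneg (1 - s))) (sq_nonneg (1 + s))]
  linarith [h1, h2, key]
end

section
/- Let X_1, …, X_k be i.i.d. Exp(1) random variables and Π_a = e^{X_a/τ} / Σ_{b=1}^k e^{X_b/τ} for τ > 1. Then for α ≥ 1/k, P(Π_a > α) = ((1−α)/((k−1)α))^τ · E[( (1/(k−1)) Σ_{b≠a} e^{X_b/τ} )^{−τ}]. -/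
open MeasureTheory ProbabilityTheory Finset

lemma expMeasure_one_Ioi {t : ℝ} (ht : 0 ≤ t) :
    expMeasure 1 (Set.Ioi t) = ENNReal.ofReal (Real.exp (-t)) := by
  have hp : IsProbabilityMeasure (expMeasure 1) := isProbabilityMeasure_expMeasure one_pos
  have hIic : expMeasure 1 (Set.Iic t) = ENNReal.ofReal (1 - Real.exp (-t)) := by
    rw [expMeasure, gammaMeasure, withDensity_apply _ measurableSet_Iic]
    have h := lintegral_exponentialPDF_eq_antiDeriv (r := 1) one_pos t
    rw [if_pos ht, one_mul] at h
    exact h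
  have : Set.Ioi t = (Set.Iic t)ᶜ := (Set.compl_Iic).symm
  rw [this, measure_compl measurableSet_Iic (measure_ne_top _ _), hIic, measure_univ]
  rw [← ENNReal.ofReal_one, ← ENNReal.ofReal_sub _
    (by simpa using Real.exp_le_one_iff.mpr (neg_nonpos.mpr ht) : (0:ℝ) ≤ 1 - Real.exp (-t))]
  norm_num

lemma expMeasure_one_Iio_zero : expMeasure 1 (Set.Iio 0) = 0 := by
  rw [expMeasure, gammaMeasure, withDensity_apply _ measurableSet_Iio]
  exact lintegral_exponentialPDF_of_nonpos le_rfl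

set_option maxHeartbeats 1000000 in
/-- Tail probability of the normalized exponential weight
`Π_a = e^{X_a/τ} / Σ_b e^{X_b/τ}` for i.i.d. `Exp(1)` variables `X_1,…,X_k`:
for `α ∈ [1/k, 1)`,
`P(Π_a > α) = ((1-α)/((k-1)α))^τ · E[((1/(k-1)) Σ_{b≠a} e^{X_b/τ})^{-τ}]`. -/
theorem powerlaw_tail (k : ℕ) (hk : 2 ≤ k) (τ : ℝ) (hτ : 1 < τ) (a : Fin k)
    (α : ℝ) (hα : 1 / (k : ℝ) ≤ α) (hα1 : α < 1) :
    ((Measure.pi (fun _ : Fin k => expMeasure 1))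
        {x | α < Real.exp (x a / τ) / ∑ b, Real.exp (x b / τ)}).toReal
      = ((1 - α) / (((k : ℝ) - 1) * α)) ^ τ *
        ∫ x, ((1 / ((k : ℝ) - 1)) * ∑ b ∈ Finset.univ.erase a, Real.exp (x b / τ)) ^ (-τ)
          ∂(Measure.pi (fun _ : Fin k => expMeasure 1)) := by
  obtain ⟨n, rfl⟩ : ∃ n, k = n + 1 := ⟨k - 1, by omega⟩
  have hn : 1 ≤ n := by omega
  have hn' : (1:ℝ) ≤ (n:ℝ) := by exact_mod_cast hn
  have hn0 : (0:ℝ) < (n:ℝ) := by linarith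
  have hτ0 : (0:ℝ) < τ := by linarith
  have hα0 : (0:ℝ) < α := lt_of_lt_of_le (by positivity) hα
  have h1α : (0:ℝ) < 1 - α := by linarith
  have hcast : ((n+1:ℕ):ℝ) - 1 = (n:ℝ) := by push_cast; ring
  simp only [hcast]
  haveI hμprob : IsProbabilityMeasure (expMeasure 1) := isProbabilityMeasure_expMeasure one_pos
  set π : Measure (Fin n → ℝ) := Measure.pi (fun _ => expMeasure 1) with hπdef
  haveI : IsProbabilityMeasure π := by rw [hπdef]; infer_instance
  set e := MeasurableEquiv.piFinSuccAbove (fun _ : Fin (n+1) => ℝ) a with hedef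
  have mp : MeasurePreserving e (Measure.pi fun _ : Fin (n+1) => expMeasure 1)
      ((expMeasure 1).prod π) := measurePreserving_piFinSuccAbove (fun _ => expMeasure 1) a
  set T : (Fin n → ℝ) → ℝ := fun y => ∑ j, Real.exp (y j / τ) with hTdef
  have hTmeas : Measurable T := by rw [hTdef]; fun_prop
  have hTpos : ∀ y, 0 < T y := fun y =>
    Finset.sum_pos (fun j _ => Real.exp_pos _) ⟨⟨0, hn⟩, Finset.mem_univ _⟩
  have hTge : ∀ y : Fin n → ℝ, (∀ j, 0 ≤ y j) → (n:ℝ) ≤ T y := by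
    intro y hy
    rw [hTdef]
    calc (n:ℝ) = ∑ _j : Fin n, (1:ℝ) := by simp
    _ ≤ ∑ j, Real.exp (y j / τ) := by
        refine Finset.sum_le_sum fun j _ => ?_
        have h0 : (0:ℝ) ≤ y j / τ := div_nonneg (hy j) hτ0.le
        calc (1:ℝ) = Real.exp 0 := Real.exp_zero.symm
        _ ≤ Real.exp (y j / τ) := Real.exp_le_exp.mpr h0
  set C : ℝ := ((1 - α) / ((n:ℝ) * α)) ^ τ with hCdef
  have hC0 : 0 ≤ C := Real.rpow_nonneg (by positivity) τ
  set g : (Fin n → ℝ) → ℝ := fun y => ((1 / (n:ℝ)) * T y) ^ (-τ) with hgdef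
  have hgmeas : Measurable g := by rw [hgdef, hTdef]; fun_prop
  have hg0 : ∀ y, 0 ≤ g y := fun y =>
    Real.rpow_nonneg (mul_nonneg (by positivity) (hTpos y).le) _
  -- almost every point has all coordinates nonnegative
  have hae : ∀ᵐ y ∂π, ∀ j, 0 ≤ y j := by
    rw [ae_all_iff]
    intro j
    rw [ae_iff]
    have hs : {y : Fin n → ℝ | ¬ 0 ≤ y j} = Function.eval j ⁻¹' Set.Iio 0 := by
      ext y; simp [not_le]
    rw [hπdef, hs]
    exact Measure.pi_eval_preimage_null (μ := fun _ : Fin n => expMeasure 1)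
      expMeasure_one_Iio_zero
  -- the event in product coordinates
  set S' : Set (ℝ × (Fin n → ℝ)) :=
    {p | α < Real.exp (p.1 / τ) / (Real.exp (p.1 / τ) + T p.2)} with hS'def
  have hS'meas : MeasurableSet S' := by
    rw [hS'def, hTdef]
    exact measurableSet_lt measurable_const (by fun_prop)
  have hpre : {x : Fin (n+1) → ℝ | α < Real.exp (x a / τ) / ∑ b, Real.exp (x b / τ)}
      = e ⁻¹' S' := by
    ext x
    simp only [Set.mem_setOf_eq, Set.mem_preimage, hS'def, hedef,
      MeasurableEquiv.piFinSuccAbove_apply, hTdef, Fin.insertNthEquiv_symm_apply,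
      Fin.removeNth]
    rw [Fin.sum_univ_succAbove (fun b => Real.exp (x b / τ)) a]
  -- inner measure computation
  have hinner : ∀ y : Fin n → ℝ, (∀ j, 0 ≤ y j) →
      expMeasure 1 ((fun x => (x, y)) ⁻¹' S') = ENNReal.ofReal (C * g y) := by
    intro y hy
    have hTn : (n:ℝ) ≤ T y := hTge y hy
    set c : ℝ := α * T y / (1 - α) with hcdef
    have hαn : 1 - α ≤ α * (n:ℝ) := by
      have h1 : (1:ℝ) ≤ α * ((n:ℝ)+1) := by
        rw [div_le_iff₀ (by positivity : (0:ℝ) < ((n+1:ℕ):ℝ))] at hα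
        push_cast at hα
        linarith
      linarith
    have hc1 : 1 ≤ c := by
      rw [hcdef, le_div_iff₀ h1α, one_mul]
      calc 1 - α ≤ α * (n:ℝ) := hαn
      _ ≤ α * T y := mul_le_mul_of_nonneg_left hTn hα0.le
    have hc0 : (0:ℝ) < c := lt_of_lt_of_le one_pos hc1
    have hset : ((fun x => (x, y)) ⁻¹' S') = Set.Ioi (τ * Real.log c) := by
      ext x
      simp only [Set.mem_preimage, hS'def, Set.mem_setOf_eq, Set.mem_Ioi]
      have hE : (0:ℝ) < Real.exp (x / τ) := Real.exp_pos _
      have hET : (0:ℝ) < Real.exp (x / τ) + T y := add_pos hE (hTpos y)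
      rw [lt_div_iff₀ hET]
      constructor
      · intro h
        have h2 : c < Real.exp (x / τ) := by
          rw [hcdef, div_lt_iff₀ h1α]; nlinarith
        have h3 : Real.log c < x / τ := (Real.log_lt_iff_lt_exp hc0).mpr h2
        calc τ * Real.log c < τ * (x / τ) := (mul_lt_mul_iff_right₀ hτ0).mpr h3
        _ = x := by field_simp
      · intro h
        have h3 : Real.log c < x / τ := by
          rw [lt_div_iff₀ hτ0]; linarith [mul_comm τ (Real.log c)]
        have h2 : c < Real.exp (x / τ) := (Real.log_lt_iff_lt_exp hc0).mp h3
        rw [hcdef, div_lt_iff₀ h1α] at h2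
        nlinarith
    rw [hset, expMeasure_one_Ioi (mul_nonneg hτ0.le (Real.log_nonneg hc1))]
    congr 1
    have hbase : (0:ℝ) < (1 / (n:ℝ)) * T y := mul_pos (by positivity) (hTpos y)
    have h1 : Real.exp (-(τ * Real.log c)) = c ^ (-τ) := by
      rw [Real.rpow_def_of_pos hc0]; ring_nf
    have hxinv : ∀ x : ℝ, 0 < x → x ^ (-τ) = (x⁻¹) ^ τ := by
      intro x hx
      rw [Real.rpow_neg hx.le, ← Real.inv_rpow hx.le]
    rw [h1, hxinv c hc0]
    simp only [hgdef, hCdef]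
    rw [hxinv _ hbase]
    rw [← Real.mul_rpow (by positivity) (inv_nonneg.mpr hbase.le)]
    congr 1
    have hT0 : T y ≠ 0 := (hTpos y).ne'
    have hn0' : (n:ℝ) ≠ 0 := hn0.ne'
    rw [hcdef]
    field_simp
  -- left-hand side
  have hLHS : (Measure.pi fun _ : Fin (n+1) => expMeasure 1)
      {x | α < Real.exp (x a / τ) / ∑ b, Real.exp (x b / τ)}
      = ENNReal.ofReal C * ∫⁻ y, ENNReal.ofReal (g y) ∂π := by
    rw [hpre, mp.measure_preimage hS'meas.nullMeasurableSet,
      Measure.prod_apply_symm hS'meas]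
    rw [lintegral_congr_ae (hae.mono fun y hy => hinner y hy)]
    simp_rw [ENNReal.ofReal_mul hC0]
    rw [lintegral_const_mul' _ _ ENNReal.ofReal_ne_top]
  -- right-hand side
  have hRHS : (∫ x, ((1 / (n:ℝ)) * ∑ b ∈ Finset.univ.erase a, Real.exp (x b / τ)) ^ (-τ)
      ∂(Measure.pi fun _ : Fin (n+1) => expMeasure 1)) = ∫ y, g y ∂π := by
    have hfun : ∀ x : Fin (n+1) → ℝ,
        ((1 / (n:ℝ)) * ∑ b ∈ Finset.univ.erase a, Real.exp (x b / τ)) ^ (-τ)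
        = g ((e x).2) := by
      intro x
      have h1 := Fin.sum_univ_succAbove (fun b => Real.exp (x b / τ)) a
      have h2 := Finset.sum_erase_add Finset.univ (fun b => Real.exp (x b / τ))
        (Finset.mem_univ a)
      have hsum : ∑ b ∈ Finset.univ.erase a, Real.exp (x b / τ)
          = ∑ j, Real.exp (x (a.succAbove j) / τ) := by
        linarith
      simp only [hgdef, hedef, MeasurableEquiv.piFinSuccAbove_apply, hTdef, hsum,
        Fin.insertNthEquiv_symm_apply, Fin.removeNth]
    simp_rw [hfun]
    calc (∫ x, g (e x).2 ∂(Measure.pi fun _ : Fin (n+1) => expMeasure 1))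
        = ∫ p, g p.2 ∂((expMeasure 1).prod π) :=
          mp.integral_comp e.measurableEmbedding (fun p => g p.2)
    _ = ∫ y, g y ∂(((expMeasure 1).prod π).map Prod.snd) :=
          (integral_map measurable_snd.aemeasurable hgmeas.aestronglyMeasurable).symm
    _ = ∫ y, g y ∂π := by
        rw [Measure.map_snd_prod, measure_univ, one_smul]
  -- integrability bound
  have hgle1 : ∀ᵐ y ∂π, ENNReal.ofReal (g y) ≤ 1 := by
    refine hae.mono fun y hy => ?_
    have hb : (1:ℝ) ≤ (1 / (n:ℝ)) * T y := by
      have h1 : T y / (n:ℝ) = (1 / (n:ℝ)) * T y := by ring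
      rw [← h1]
      exact (one_le_div hn0).mpr (hTge y hy)
    have hle : g y ≤ 1 := by
      rw [hgdef]
      exact Real.rpow_le_one_of_one_le_of_nonpos hb (by linarith)
    calc ENNReal.ofReal (g y) ≤ ENNReal.ofReal 1 := ENNReal.ofReal_le_ofReal hle
    _ = 1 := ENNReal.ofReal_one
  have hfin : (∫⁻ y, ENNReal.ofReal (g y) ∂π) ≠ ⊤ := by
    have hle : (∫⁻ y, ENNReal.ofReal (g y) ∂π) ≤ 1 := by
      calc (∫⁻ y, ENNReal.ofReal (g y) ∂π) ≤ ∫⁻ _, 1 ∂π := lintegral_mono_ae hgle1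
      _ = 1 := by simp
    exact ne_top_of_le_ne_top ENNReal.one_ne_top hle
  have hint : ∫ y, g y ∂π = (∫⁻ y, ENNReal.ofReal (g y) ∂π).toReal :=
    integral_eq_lintegral_of_nonneg_ae (ae_of_all _ hg0) hgmeas.aestronglyMeasurable
  rw [hLHS, hRHS, hint, ENNReal.toReal_mul, ENNReal.toReal_ofReal hC0]
end
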